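/- Nesting of Weyl discs under the ⊲ operation: For Q ∈ 𝓜(1,r,+) with blocks [[α,β],[γ,δ]] define the Weyl disc 𝕎_Q ⊂ ℂ as the closure of { α + βA(1_r − δA)^{-1}γ : A ∈ ℂ^{r×r}, Im(A) positive semidefinite } (the inverse exists since Im(δ) is positive definite). If Q ∈ 𝓜(1,r,+) and R ∈ 𝓜(r,s,+), then (Q,R) is ⊲_r-suitable, Q ⊲_r R ∈ 𝓜(1,s,+), and 𝕎_{Q ⊲_r R} ⊆ 𝕎_Q. -/

import Mathlib

open Matrix
open scoped ComplexOrder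

noncomputable section

/-- The imaginary part `(M − M^*)/(2i)` of a square complex matrix. -/
def matIm {n : Type*} (M : Matrix n n ℂ) : Matrix n n ℂ :=
  (2 * Complex.I)⁻¹ • (M - Mᴴ)

/-- The pair `(Q, R)` (with assigned block splittings) is `⊲`-suitable:
`1 - α̃ δ` is invertible. -/
def Suitable {q r s : ℕ}
    (Q : Matrix (Fin q ⊕ Fin r) (Fin q ⊕ Fin r) ℂ)
    (R : Matrix (Fin r ⊕ Fin s) (Fin r ⊕ Fin s) ℂ) : Prop :=
  IsUnit (1 - R.toBlocks₁₁ * Q.toBlocks₂₂)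

/-- The operation `Q ⊲_r R` on block matrices. -/
def tri {q r s : ℕ}
    (Q : Matrix (Fin q ⊕ Fin r) (Fin q ⊕ Fin r) ℂ)
    (R : Matrix (Fin r ⊕ Fin s) (Fin r ⊕ Fin s) ℂ) :
    Matrix (Fin q ⊕ Fin s) (Fin q ⊕ Fin s) ℂ :=
  fromBlocks
    (Q.toBlocks₁₁ +
      Q.toBlocks₁₂ * (1 - R.toBlocks₁₁ * Q.toBlocks₂₂)⁻¹ * R.toBlocks₁₁ * Q.toBlocks₂₁)
    (Q.toBlocks₁₂ * (1 - R.toBlocks₁₁ * Q.toBlocks₂₂)⁻¹ * R.toBlocks₁₂)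
    (R.toBlocks₂₁ * (1 - Q.toBlocks₂₂ * R.toBlocks₁₁)⁻¹ * Q.toBlocks₂₁)
    (R.toBlocks₂₂ +
      R.toBlocks₂₁ * (1 - Q.toBlocks₂₂ * R.toBlocks₁₁)⁻¹ * Q.toBlocks₂₂ * R.toBlocks₁₂)

/-- `Q ∈ 𝓜(q,r,+)`: `Im(α)` and `Im(δ)` are positive definite and `Im(Q)` is
positive semidefinite. -/
def MPlus {q r : ℕ} (Q : Matrix (Fin q ⊕ Fin r) (Fin q ⊕ Fin r) ℂ) : Prop :=
  (matIm Q.toBlocks₁₁).PosDef ∧ (matIm Q.toBlocks₂₂).PosDef ∧ (matIm Q).PosSemidef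

/-- The Weyl disc of `Q ∈ 𝓜(1,r,+)`: the closure of
`{α + βA(1 − δA)⁻¹γ : Im(A) positive semidefinite}`. -/
def weylDisc {r : ℕ} (Q : Matrix (Fin 1 ⊕ Fin r) (Fin 1 ⊕ Fin r) ℂ) : Set ℂ :=
  closure {w : ℂ | ∃ A : Matrix (Fin r) (Fin r) ℂ, (matIm A).PosSemidef ∧
    w = (Q.toBlocks₁₁ 0 0 +
      (Q.toBlocks₁₂ * A * (1 - Q.toBlocks₂₂ * A)⁻¹ * Q.toBlocks₂₁) 0 0)}

/-!
Read a block matrix `M = [[α, β], [γ, δ]]` as a relation `M (x, u) = (p, v)` between inputs and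
outputs. Then `Q ⊲ R` is the coupling that feeds the output `v` of `Q` into `R` and the output `u`
of `R` back into `Q`: if `Q (x, u) = (p, v)` and `R (v, y) = (u, z)`, then `(Q ⊲ R) (x, y) = (p, z)`.
As `⟪u, v⟫ + ⟪v, u⟫` is real, `Im ⟪(x, y), (Q ⊲ R) (x, y)⟫` is the sum of the corresponding
quantities for `Q` and `R`, whence `Q ⊲ R ∈ 𝓜(1,s,+)`.

The points of a Weyl disc are the entries of the linear fractional map
`linFrac M A = α + β A (1 - δ A)⁻¹ γ`, which closes the second channel of `M` by `u = A v`.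
Closing `Q ⊲ R` by `A` is the same as closing `Q` by `linFrac R A`, and `Im (linFrac R A) ≥ 0`
when `Im A ≥ 0`; so every point of the disc of `Q ⊲ R` already lies in the disc of `Q`.
-/

section MatIm

variable {n : Type*}

lemma isHermitian_matIm (M : Matrix n n ℂ) : (matIm M).IsHermitian := by
  rw [matIm, IsHermitian, conjTranspose_smul, conjTranspose_sub, conjTranspose_conjTranspose,
    show star (2 * Complex.I)⁻¹ = -(2 * Complex.I)⁻¹ by simp, neg_smul,
    ← smul_neg, neg_sub]

variable [Fintype n]

lemma dotProduct_matIm_mulVec (M : Matrix n n ℂ) (x : n → ℂ) :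
    star x ⬝ᵥ matIm M *ᵥ x = ((star x ⬝ᵥ M *ᵥ x).im : ℂ) := by
  have hconj : star x ⬝ᵥ Mᴴ *ᵥ x = star (star x ⬝ᵥ M *ᵥ x) := by
    rw [star_dotProduct, star_mulVec, conjTranspose_conjTranspose, ← dotProduct_mulVec]
  rw [matIm, smul_mulVec, dotProduct_smul, sub_mulVec, dotProduct_sub, hconj, smul_eq_mul,
    Complex.star_def, Complex.sub_conj]
  field_simp [Complex.I_ne_zero]
  push_cast
  ring

lemma posSemidef_matIm_iff (M : Matrix n n ℂ) :
    (matIm M).PosSemidef ↔ ∀ x : n → ℂ, 0 ≤ (star x ⬝ᵥ M *ᵥ x).im := by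
  simp only [posSemidef_iff_dotProduct_mulVec, dotProduct_matIm_mulVec, Complex.zero_le_real,
    isHermitian_matIm, true_and]

lemma posDef_matIm_iff (M : Matrix n n ℂ) :
    (matIm M).PosDef ↔ ∀ x : n → ℂ, x ≠ 0 → 0 < (star x ⬝ᵥ M *ᵥ x).im := by
  simp only [posDef_iff_dotProduct_mulVec, dotProduct_matIm_mulVec, Complex.zero_lt_real,
    isHermitian_matIm, true_and]

lemma im_star_dotProduct_swap (u v : n → ℂ) : (star v ⬝ᵥ u).im = -(star u ⬝ᵥ v).im := by
  rw [star_dotProduct, Complex.star_def, Complex.conj_im]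

variable [DecidableEq n]

/-- If `(1 - M N) v = 0`, then `w = N v` satisfies `v = M w`, so that
`Im ⟪w, M w⟫ = Im ⟪w, v⟫ = -Im ⟪v, N v⟫ ≤ 0`, forcing `w = 0` and hence `v = 0`. -/
lemma isUnit_one_sub_mul_of_matIm {M N : Matrix n n ℂ} (hM : (matIm M).PosDef)
    (hN : (matIm N).PosSemidef) : IsUnit (1 - M * N) := by
  rw [← mulVec_injective_iff_isUnit, ← coe_mulVecLin, injective_iff_map_eq_zero]
  intro v hv
  rw [coe_mulVecLin, sub_mulVec, one_mulVec, sub_eq_zero, ← mulVec_mulVec] at hv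
  have hw : N *ᵥ v = 0 := by
    by_contra hw
    have hpos := (posDef_matIm_iff M).1 hM _ hw
    rw [← hv, im_star_dotProduct_swap] at hpos
    linarith [(posSemidef_matIm_iff N).1 hN v]
  rw [hv, hw, mulVec_zero]

end MatIm

lemma isUnit_one_sub_mul_comm {m n α : Type*} [Fintype m] [Fintype n] [DecidableEq m]
    [DecidableEq n] [CommRing α] {A : Matrix m n α} {B : Matrix n m α} :
    IsUnit (1 - A * B) ↔ IsUnit (1 - B * A) := by
  rw [isUnit_iff_isUnit_det, isUnit_iff_isUnit_det, det_one_sub_mul_comm]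

lemma mulVec_nonsing_inv_mulVec {n α : Type*} [Fintype n] [DecidableEq n] [CommRing α]
    {A : Matrix n n α} (hA : IsUnit A) (w : n → α) : A *ᵥ A⁻¹ *ᵥ w = w := by
  rw [mulVec_mulVec, mul_nonsing_inv A ((isUnit_iff_isUnit_det A).1 hA), one_mulVec]

lemma eq_nonsing_inv_mulVec_of_mulVec_eq {n α : Type*} [Fintype n] [DecidableEq n] [CommRing α]
    {A : Matrix n n α} (hA : IsUnit A) {u w : n → α} (h : A *ᵥ u = w) : u = A⁻¹ *ᵥ w := by
  rw [← h, mulVec_mulVec, nonsing_inv_mul A ((isUnit_iff_isUnit_det A).1 hA), one_mulVec]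

section Blocks

variable {l m n o α : Type*}

lemma mulVec_sumElim [Fintype n] [Fintype o] [NonUnitalNonAssocSemiring α]
    (M : Matrix (l ⊕ m) (n ⊕ o) α) (x : n → α) (y : o → α) :
    M *ᵥ Sum.elim x y = Sum.elim (M.toBlocks₁₁ *ᵥ x + M.toBlocks₁₂ *ᵥ y)
      (M.toBlocks₂₁ *ᵥ x + M.toBlocks₂₂ *ᵥ y) := by
  conv_lhs => rw [← fromBlocks_toBlocks M]
  rw [fromBlocks_mulVec, Sum.elim_comp_inl, Sum.elim_comp_inr]

lemma mulVec_sumElim_eq_sumElim_iff [Fintype n] [Fintype o] [NonUnitalNonAssocSemiring α]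
    (M : Matrix (l ⊕ m) (n ⊕ o) α) (x : n → α) (y : o → α) (p : l → α) (q : m → α) :
    M *ᵥ Sum.elim x y = Sum.elim p q ↔
      M.toBlocks₁₁ *ᵥ x + M.toBlocks₁₂ *ᵥ y = p ∧ M.toBlocks₂₁ *ᵥ x + M.toBlocks₂₂ *ᵥ y = q := by
  rw [mulVec_sumElim, Sum.elim_eq_iff]

lemma star_sumElim_dotProduct_sumElim [Fintype m] [Fintype n] [NonUnitalNonAssocSemiring α]
    [StarRing α] (x p : m → α) (y q : n → α) :
    star (Sum.elim x y) ⬝ᵥ Sum.elim p q = star x ⬝ᵥ p + star y ⬝ᵥ q := by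
  rw [Function.star_sumElim, sumElim_dotProduct_sumElim]

variable [Fintype m] [Fintype n] [NonUnitalNonAssocSemiring α] [StarRing α]

lemma dotProduct_mulVec_sumElim_zero_right (M : Matrix (m ⊕ n) (m ⊕ n) α) (x : m → α) :
    star (Sum.elim x 0) ⬝ᵥ M *ᵥ Sum.elim x (0 : n → α) = star x ⬝ᵥ M.toBlocks₁₁ *ᵥ x := by
  simp [mulVec_sumElim, star_sumElim_dotProduct_sumElim]

lemma dotProduct_mulVec_sumElim_zero_left (M : Matrix (m ⊕ n) (m ⊕ n) α) (y : n → α) :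
    star (Sum.elim 0 y) ⬝ᵥ M *ᵥ Sum.elim (0 : m → α) y = star y ⬝ᵥ M.toBlocks₂₂ *ᵥ y := by
  simp [mulVec_sumElim, star_sumElim_dotProduct_sumElim]

end Blocks

section LinFrac

variable {m n α : Type*} [Fintype m] [Fintype n] [DecidableEq n] [CommRing α]

def linFrac (M : Matrix (m ⊕ n) (m ⊕ n) α) (A : Matrix n n α) : Matrix m m α :=
  M.toBlocks₁₁ + M.toBlocks₁₂ * A * (1 - M.toBlocks₂₂ * A)⁻¹ * M.toBlocks₂₁

variable {M : Matrix (m ⊕ n) (m ⊕ n) α} {A : Matrix n n α}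

lemma exists_mulVec_sumElim_eq_linFrac (hA : IsUnit (1 - M.toBlocks₂₂ * A)) (x : m → α) :
    ∃ t, M *ᵥ Sum.elim x (A *ᵥ t) = Sum.elim (linFrac M A *ᵥ x) t := by
  set t := (1 - M.toBlocks₂₂ * A)⁻¹ *ᵥ M.toBlocks₂₁ *ᵥ x
  have ht : (1 - M.toBlocks₂₂ * A) *ᵥ t = M.toBlocks₂₁ *ᵥ x := mulVec_nonsing_inv_mulVec hA _
  refine ⟨t, (mulVec_sumElim_eq_sumElim_iff _ _ _ _ _).2 ⟨?_, ?_⟩⟩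
  · simp only [t, linFrac, add_mulVec, mulVec_mulVec, Matrix.mul_assoc]
  · rw [← ht, sub_mulVec, one_mulVec, ← mulVec_mulVec, sub_add_cancel]

lemma linFrac_mulVec_eq_of_mulVec_sumElim (hA : IsUnit (1 - M.toBlocks₂₂ * A)) {x p : m → α}
    {t : n → α} (h : M *ᵥ Sum.elim x (A *ᵥ t) = Sum.elim p t) : linFrac M A *ᵥ x = p := by
  obtain ⟨hp, ht⟩ := (mulVec_sumElim_eq_sumElim_iff _ _ _ _ _).1 h
  have ht' : t = (1 - M.toBlocks₂₂ * A)⁻¹ *ᵥ M.toBlocks₂₁ *ᵥ x := by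
    refine eq_nonsing_inv_mulVec_of_mulVec_eq hA ?_
    rw [sub_mulVec, one_mulVec, sub_eq_iff_eq_add, ← mulVec_mulVec]
    exact ht.symm
  rw [← hp, ht']
  simp only [linFrac, add_mulVec, mulVec_mulVec, Matrix.mul_assoc]

end LinFrac

lemma posSemidef_matIm_linFrac {m n : Type*} [Fintype m] [Fintype n] [DecidableEq n]
    {M : Matrix (m ⊕ n) (m ⊕ n) ℂ} {A : Matrix n n ℂ} (hM : (matIm M).PosSemidef)
    (hδ : (matIm M.toBlocks₂₂).PosDef) (hA : (matIm A).PosSemidef) :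
    (matIm (linFrac M A)).PosSemidef := by
  refine (posSemidef_matIm_iff _).2 fun x => ?_
  obtain ⟨t, ht⟩ := exists_mulVec_sumElim_eq_linFrac (isUnit_one_sub_mul_of_matIm hδ hA) x
  have hMx := (posSemidef_matIm_iff M).1 hM (Sum.elim x (A *ᵥ t))
  rw [ht, star_sumElim_dotProduct_sumElim, Complex.add_im,
    im_star_dotProduct_swap t (A *ᵥ t)] at hMx
  linarith [(posSemidef_matIm_iff A).1 hA t]

section Tri

variable {q r s : ℕ} {Q : Matrix (Fin q ⊕ Fin r) (Fin q ⊕ Fin r) ℂ}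
  {R : Matrix (Fin r ⊕ Fin s) (Fin r ⊕ Fin s) ℂ}

lemma Suitable.exists_mulVec_sumElim (hs : Suitable Q R) (x : Fin q → ℂ) (y : Fin s → ℂ) :
    ∃ p u v z, Q *ᵥ Sum.elim x u = Sum.elim p v ∧ R *ᵥ Sum.elim v y = Sum.elim u z := by
  set u := (1 - R.toBlocks₁₁ * Q.toBlocks₂₂)⁻¹ *ᵥ
    (R.toBlocks₁₁ *ᵥ Q.toBlocks₂₁ *ᵥ x + R.toBlocks₁₂ *ᵥ y)
  have hu : (1 - R.toBlocks₁₁ * Q.toBlocks₂₂) *ᵥ u =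
      R.toBlocks₁₁ *ᵥ Q.toBlocks₂₁ *ᵥ x + R.toBlocks₁₂ *ᵥ y :=
    mulVec_nonsing_inv_mulVec hs _
  refine ⟨_, u, _, _, mulVec_sumElim Q x u,
    (mulVec_sumElim_eq_sumElim_iff _ _ _ _ _).2 ⟨?_, rfl⟩⟩
  rw [mulVec_add, add_right_comm, ← hu, sub_mulVec, one_mulVec, ← mulVec_mulVec, sub_add_cancel]

lemma Suitable.tri_mulVec_sumElim (hs : Suitable Q R) {x p : Fin q → ℂ} {u v : Fin r → ℂ}
    {y z : Fin s → ℂ} (hQ : Q *ᵥ Sum.elim x u = Sum.elim p v)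
    (hR : R *ᵥ Sum.elim v y = Sum.elim u z) : tri Q R *ᵥ Sum.elim x y = Sum.elim p z := by
  obtain ⟨hp, hv⟩ := (mulVec_sumElim_eq_sumElim_iff _ _ _ _ _).1 hQ
  obtain ⟨hu, hz⟩ := (mulVec_sumElim_eq_sumElim_iff _ _ _ _ _).1 hR
  have hu' : u = (1 - R.toBlocks₁₁ * Q.toBlocks₂₂)⁻¹ *ᵥ
      (R.toBlocks₁₁ *ᵥ Q.toBlocks₂₁ *ᵥ x + R.toBlocks₁₂ *ᵥ y) := by
    refine eq_nonsing_inv_mulVec_of_mulVec_eq hs ?_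
    rw [sub_mulVec, one_mulVec, sub_eq_iff_eq_add]
    nth_rewrite 1 [← hu, ← hv]
    rw [mulVec_add, ← mulVec_mulVec]
    abel
  have hv' : v = (1 - Q.toBlocks₂₂ * R.toBlocks₁₁)⁻¹ *ᵥ
      (Q.toBlocks₂₁ *ᵥ x + Q.toBlocks₂₂ *ᵥ R.toBlocks₁₂ *ᵥ y) := by
    refine eq_nonsing_inv_mulVec_of_mulVec_eq (isUnit_one_sub_mul_comm.1 hs) ?_
    rw [sub_mulVec, one_mulVec, sub_eq_iff_eq_add]
    nth_rewrite 1 [← hv, ← hu]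
    rw [mulVec_add, ← mulVec_mulVec]
    abel
  refine (mulVec_sumElim_eq_sumElim_iff _ _ _ _ _).2 ⟨?_, ?_⟩
  · rw [← hp, hu']
    simp only [tri, toBlocks_fromBlocks₁₁, toBlocks_fromBlocks₁₂, add_mulVec, mulVec_add,
      mulVec_mulVec, Matrix.mul_assoc]
    abel
  · rw [← hz, hv']
    simp only [tri, toBlocks_fromBlocks₂₁, toBlocks_fromBlocks₂₂, add_mulVec, mulVec_add,
      mulVec_mulVec, Matrix.mul_assoc]
    abel

/-- The cross terms `⟪u, v⟫ + ⟪v, u⟫` of the two channels are real, so they drop out. -/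
lemma Suitable.im_dotProduct_tri_mulVec (hs : Suitable Q R) {x p : Fin q → ℂ}
    {u v : Fin r → ℂ} {y z : Fin s → ℂ} (hQ : Q *ᵥ Sum.elim x u = Sum.elim p v)
    (hR : R *ᵥ Sum.elim v y = Sum.elim u z) :
    (star (Sum.elim x y) ⬝ᵥ tri Q R *ᵥ Sum.elim x y).im =
      (star (Sum.elim x u) ⬝ᵥ Q *ᵥ Sum.elim x u).im +
        (star (Sum.elim v y) ⬝ᵥ R *ᵥ Sum.elim v y).im := by
  rw [hs.tri_mulVec_sumElim hQ hR, hQ, hR]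
  simp only [star_sumElim_dotProduct_sumElim, Complex.add_im]
  rw [im_star_dotProduct_swap u v]
  ring

lemma MPlus.suitable (hQ : MPlus Q) (hR : MPlus R) : Suitable Q R :=
  isUnit_one_sub_mul_of_matIm hR.1 hQ.2.1.posSemidef

lemma posSemidef_matIm_tri (hs : Suitable Q R) (hQ : (matIm Q).PosSemidef)
    (hR : (matIm R).PosSemidef) : (matIm (tri Q R)).PosSemidef := by
  refine (posSemidef_matIm_iff _).2 fun w => ?_
  obtain ⟨p, u, v, z, hQx, hRv⟩ := hs.exists_mulVec_sumElim (w ∘ Sum.inl) (w ∘ Sum.inr)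
  rw [← Sum.elim_comp_inl_inr w, hs.im_dotProduct_tri_mulVec hQx hRv]
  linarith [(posSemidef_matIm_iff Q).1 hQ (Sum.elim (w ∘ Sum.inl) u),
    (posSemidef_matIm_iff R).1 hR (Sum.elim v (w ∘ Sum.inr))]

lemma posDef_matIm_tri_toBlocks₁₁ (hs : Suitable Q R) (hQ : (matIm Q).PosSemidef)
    (hR : (matIm R).PosSemidef) (hQα : (matIm Q.toBlocks₁₁).PosDef)
    (hRα : (matIm R.toBlocks₁₁).PosDef) : (matIm (tri Q R).toBlocks₁₁).PosDef := by
  refine (posDef_matIm_iff _).2 fun x hx => ?_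
  obtain ⟨p, u, v, z, hQx, hRv⟩ := hs.exists_mulVec_sumElim x 0
  rw [← dotProduct_mulVec_sumElim_zero_right, hs.im_dotProduct_tri_mulVec hQx hRv]
  by_cases hv : v = 0
  · have hu : u = 0 := by
      simpa [hv] using ((mulVec_sumElim_eq_sumElim_iff _ _ _ _ _).1 hRv).1.symm
    subst hu hv
    rw [dotProduct_mulVec_sumElim_zero_right Q]
    linarith [(posDef_matIm_iff _).1 hQα x hx, (posSemidef_matIm_iff R).1 hR (Sum.elim 0 0)]
  · rw [dotProduct_mulVec_sumElim_zero_right R]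
    linarith [(posDef_matIm_iff _).1 hRα v hv, (posSemidef_matIm_iff Q).1 hQ (Sum.elim x u)]

lemma posDef_matIm_tri_toBlocks₂₂ (hs : Suitable Q R) (hQ : (matIm Q).PosSemidef)
    (hR : (matIm R).PosSemidef) (hQδ : (matIm Q.toBlocks₂₂).PosDef)
    (hRδ : (matIm R.toBlocks₂₂).PosDef) : (matIm (tri Q R).toBlocks₂₂).PosDef := by
  refine (posDef_matIm_iff _).2 fun y hy => ?_
  obtain ⟨p, u, v, z, hQx, hRv⟩ := hs.exists_mulVec_sumElim 0 y
  rw [← dotProduct_mulVec_sumElim_zero_left, hs.im_dotProduct_tri_mulVec hQx hRv]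
  by_cases hu : u = 0
  · have hv : v = 0 := by
      simpa [hu] using ((mulVec_sumElim_eq_sumElim_iff _ _ _ _ _).1 hQx).2.symm
    subst hu hv
    rw [dotProduct_mulVec_sumElim_zero_left R]
    linarith [(posDef_matIm_iff _).1 hRδ y hy, (posSemidef_matIm_iff Q).1 hQ (Sum.elim 0 0)]
  · rw [dotProduct_mulVec_sumElim_zero_left Q]
    linarith [(posDef_matIm_iff _).1 hQδ u hu, (posSemidef_matIm_iff R).1 hR (Sum.elim v y)]

lemma MPlus.tri (hQ : MPlus Q) (hR : MPlus R) : MPlus (tri Q R) :=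
  have hs := hQ.suitable hR
  ⟨posDef_matIm_tri_toBlocks₁₁ hs hQ.2.2 hR.2.2 hQ.1 hR.1,
    posDef_matIm_tri_toBlocks₂₂ hs hQ.2.2 hR.2.2 hQ.2.1 hR.2.1,
    posSemidef_matIm_tri hs hQ.2.2 hR.2.2⟩

lemma Suitable.linFrac_tri (hs : Suitable Q R) {A : Matrix (Fin s) (Fin s) ℂ}
    (hT : IsUnit (1 - (tri Q R).toBlocks₂₂ * A)) (hR : IsUnit (1 - R.toBlocks₂₂ * A))
    (hQ : IsUnit (1 - Q.toBlocks₂₂ * linFrac R A)) :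
    linFrac (tri Q R) A = linFrac Q (linFrac R A) := by
  refine ext_iff_mulVec.2 fun x => ?_
  obtain ⟨v, hQx⟩ := exists_mulVec_sumElim_eq_linFrac hQ x
  obtain ⟨z, hRv⟩ := exists_mulVec_sumElim_eq_linFrac hR v
  exact linFrac_mulVec_eq_of_mulVec_sumElim hT (hs.tri_mulVec_sumElim hQx hRv)

end Tri

/-- Nesting of Weyl discs under the `⊲` operation. -/
theorem weyl_disc_nested {r s : ℕ}
    (Q : Matrix (Fin 1 ⊕ Fin r) (Fin 1 ⊕ Fin r) ℂ)
    (R : Matrix (Fin r ⊕ Fin s) (Fin r ⊕ Fin s) ℂ)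
    (hQ : MPlus Q) (hR : MPlus R) :
    Suitable Q R ∧ MPlus (tri Q R) ∧ weylDisc (tri Q R) ⊆ weylDisc Q := by
  have hs : Suitable Q R := hQ.suitable hR
  have hT : MPlus (tri Q R) := hQ.tri hR
  refine ⟨hs, hT, closure_mono ?_⟩
  rintro _ ⟨A, hA, rfl⟩
  have hA' : (matIm (linFrac R A)).PosSemidef := posSemidef_matIm_linFrac hR.2.2 hR.2.1 hA
  have hcomp := hs.linFrac_tri (isUnit_one_sub_mul_of_matIm hT.2.1 hA)
    (isUnit_one_sub_mul_of_matIm hR.2.1 hA) (isUnit_one_sub_mul_of_matIm hQ.2.1 hA')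
  exact ⟨linFrac R A, hA', congrFun (congrFun hcomp 0) 0⟩

end
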